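/- If all entries of X lie in the interval [m, M] and all entries of Y lie in [m, M], with X of length l1 ≤ l2 = length of Y, then diss(X, Y) ≤ (M − m) · √(l2) / (2 l2) = (M − m)/(2√(l2)). In particular diss(X,Y) ≤ (M − m)/2. -/

import Mathlib

/-- ℕ-indexed extension of `X : Fin l1 → ℝ`: `l2` copies of the first value,
then `X`, then copies of the last value (clamped indexing). -/
noncomputable def extN (l1 l2 : ℕ) (h : 1 ≤ l1) (X : Fin l1 → ℝ) : ℕ → ℝ :=
  fun i => X ⟨min (i - l2) (l1 - 1), by omega⟩

/-- Euclidean norm on ℝ^n. -/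
noncomputable def enorm {n : ℕ} (v : Fin n → ℝ) : ℝ :=
  Real.sqrt (∑ j, v j ^ 2)

/-- Dissimilarity between curves of lengths `l1 ≤ l2`: minimum over the
sliding windows `q ∈ {0, …, l1+l2-2}` (0-based) of the normalized Euclidean
distance between the length-`l2` window of the extension of `X` and `Y`. -/
noncomputable def diss (l1 l2 : ℕ) (h1 : 1 ≤ l1) (h2 : 1 ≤ l2)
    (X : Fin l1 → ℝ) (Y : Fin l2 → ℝ) : ℝ :=
  (Finset.range (l1 + l2 - 1)).inf'
    (Finset.nonempty_range_iff.mpr (by omega))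
    fun q => _root_.enorm (fun j : Fin l2 => extN l1 l2 h1 X (q + j) - Y j) / (2 * l2)

/-!
The minimum over windows is at most the normalized distance of the window `q = 0`, whose
entries are values of `X`.
All entries of `X` and `Y` lie in `[m, M]`, so each coordinate of the difference is at most
`M - m` in absolute value and its Euclidean norm is at most `(M - m) √l2`. Finally `√l2 ≤ l2`.
-/

theorem extN_mem_range (l1 l2 : ℕ) (h : 1 ≤ l1) (X : Fin l1 → ℝ) (i : ℕ) :
    extN l1 l2 h X i ∈ Set.range X :=
  ⟨_, rfl⟩

theorem enorm_le_mul_sqrt_of_abs_le {n : ℕ} (v : Fin n → ℝ) {c : ℝ} (hc : 0 ≤ c)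
    (hv : ∀ j, |v j| ≤ c) : _root_.enorm v ≤ c * √n := by
  rw [_root_.enorm, Real.sqrt_le_left (by positivity)]
  calc ∑ j, v j ^ 2 ≤ ∑ _j : Fin n, c ^ 2 :=
        Finset.sum_le_sum fun j _ => sq_abs (v j) ▸ pow_le_pow_left₀ (abs_nonneg _) (hv j) 2
    _ = (c * √n) ^ 2 := by simp [mul_pow, mul_comm]

theorem diss_le_first_window (l1 l2 : ℕ) (h1 : 1 ≤ l1) (h2 : 1 ≤ l2)
    (X : Fin l1 → ℝ) (Y : Fin l2 → ℝ) :
    diss l1 l2 h1 h2 X Y ≤ _root_.enorm (fun j : Fin l2 => extN l1 l2 h1 X j - Y j) / (2 * l2) := by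
  have h0 : 0 ∈ Finset.range (l1 + l2 - 1) := Finset.mem_range.2 (by omega)
  exact (Finset.inf'_le _ h0).trans_eq (by simp only [Nat.zero_add])

theorem mul_sqrt_div_two_mul_le {a x : ℝ} (ha : 0 ≤ a) (hx : 1 ≤ x) :
    a * √x / (2 * x) ≤ a / 2 := by
  have hsqrt : √x ≤ x := Real.sqrt_le_self_iff.2 (Or.inr hx)
  rw [div_le_div_iff₀ (by positivity) two_pos]
  nlinarith

theorem diss_le_of_bounded_general (l1 l2 : ℕ) (h1 : 1 ≤ l1) (h2 : 1 ≤ l2)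
    (m M : ℝ) (X : Fin l1 → ℝ) (Y : Fin l2 → ℝ)
    (hX : ∀ i, m ≤ X i ∧ X i ≤ M) (hY : ∀ j, m ≤ Y j ∧ Y j ≤ M) :
    diss l1 l2 h1 h2 X Y ≤ (M - m) * Real.sqrt l2 / (2 * l2) ∧
    diss l1 l2 h1 h2 X Y ≤ (M - m) / 2 := by
  have hmM : 0 ≤ M - m := sub_nonneg.2 ((hY ⟨0, h2⟩).1.trans (hY ⟨0, h2⟩).2)
  have hdiff : ∀ j : Fin l2, |extN l1 l2 h1 X j - Y j| ≤ M - m := fun j => by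
    obtain ⟨k, hk⟩ := extN_mem_range l1 l2 h1 X j
    rw [← hk]
    exact abs_sub_le_of_le_of_le (hX k).1 (hX k).2 (hY j).1 (hY j).2
  have hdiss : diss l1 l2 h1 h2 X Y ≤ (M - m) * Real.sqrt l2 / (2 * l2) :=
    (diss_le_first_window l1 l2 h1 h2 X Y).trans <| by
      gcongr
      exact enorm_le_mul_sqrt_of_abs_le _ hmM hdiff
  exact ⟨hdiss, hdiss.trans (mul_sqrt_div_two_mul_le hmM (by exact_mod_cast h2))⟩

theorem diss_le_of_bounded (l1 l2 : ℕ) (h1 : 1 ≤ l1) (h2 : 1 ≤ l2)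
    (hle : l1 ≤ l2) (m M : ℝ) (X : Fin l1 → ℝ) (Y : Fin l2 → ℝ)
    (hX : ∀ i, m ≤ X i ∧ X i ≤ M) (hY : ∀ j, m ≤ Y j ∧ Y j ≤ M) :
    diss l1 l2 h1 h2 X Y ≤ (M - m) * Real.sqrt l2 / (2 * l2) ∧
    diss l1 l2 h1 h2 X Y ≤ (M - m) / 2 :=
  diss_le_of_bounded_general l1 l2 h1 h2 m M X Y hX hY
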